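/- With the same construction as the reduction from s-t reachability: if there is a directed path from s to t in G of length at most m, then there is a T-tiling of the (m + 2) × 1 rectangle whose first tile is the seed tile (up = white, down = s). -/

import Mathlib

/-!
Prepend loops at `s` to the path so that it has length exactly `m`, giving `w 0 = s, …, w m = t`.
The column whose vertical colors read `none, w 0, …, w m, none` is then a tiling: its tiles are
the seed, loops `(s, s)`, edge tiles, and the final tile `(t, none)`.
-/

structure Tile (C : Type) where
  left : C
  up : C
  right : C
  down : C
deriving DecidableEq

/-- A `T`-tiling of the `H × W` rectangle: all tiles are from `T`, the borders are
white on all four sides, and adjacent tiles match horizontally and vertically. -/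
def IsTiling {C : Type} (white : C) (T : Finset (Tile C)) (H W : ℕ)
    (τ : Fin H → Fin W → Tile C) : Prop :=
  (∀ i j, τ i j ∈ T) ∧
  (∀ i j, j.val = 0 → (τ i j).left = white) ∧
  (∀ i j, j.val = W - 1 → (τ i j).right = white) ∧
  (∀ i j, i.val = 0 → (τ i j).up = white) ∧
  (∀ i j, i.val = H - 1 → (τ i j).down = white) ∧
  (∀ (i : Fin H) (j : Fin W) (h : j.val + 1 < W),
      (τ i j).right = (τ i ⟨j.val + 1, h⟩).left) ∧
  (∀ (i : Fin H) (j : Fin W) (h : i.val + 1 < H),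
      (τ i j).down = (τ ⟨i.val + 1, h⟩ j).up)

/-- A `T`-tiling of the `h × 1` rectangle (a single column): left/right colors of all
tiles are white, top of the first and bottom of the last tile are white, and
consecutive tiles match vertically. -/
def IsColTiling {C : Type} (white : C) (T : Finset (Tile C)) (h : ℕ)
    (τ : Fin h → Tile C) : Prop :=
  (∀ i, τ i ∈ T) ∧
  (∀ i : Fin h, i.val = 0 → (τ i).up = white) ∧
  (∀ i : Fin h, i.val = h - 1 → (τ i).down = white) ∧
  (∀ i, (τ i).left = white) ∧
  (∀ i, (τ i).right = white) ∧
  (∀ (i : Fin h) (hlt : i.val + 1 < h), (τ i).down = (τ ⟨i.val + 1, hlt⟩).up)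

/-- A deterministic set of tile types: there is a partition of the colors
`C = Col ⊔ Colᶜ` with `white ∈ Col` such that tops and bottoms of tiles lie on
opposite sides, and a tile is determined by its (left,up) colors when its left
color is in `Col`, and by its (right,up) colors when its right color is in `Colᶜ`. -/
def Deterministic {C : Type} (white : C) (T : Finset (Tile C)) : Prop :=
  ∃ Col : Set C, white ∈ Col ∧
    (∀ t ∈ T, (t.up ∈ Col ↔ t.down ∉ Col)) ∧
    (∀ c ∈ Col, ∀ c' : C, ∀ t ∈ T, ∀ t' ∈ T,
       t.left = c → t.up = c' → t'.left = c → t'.up = c' → t = t') ∧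
    (∀ c ∉ Col, ∀ c' : C, ∀ t ∈ T, ∀ t' ∈ T,
       t.right = c → t.up = c' → t'.right = c → t'.up = c' → t = t')

/-- Tile types for the reduction from s-t reachability: colors are `Option V`
with `none` playing the role of white. -/
def reachTiles {V : Type} [Fintype V] [DecidableEq V]
    (E : V → V → Prop) [DecidableRel E] (s t : V) : Finset (Tile (Option V)) :=
  ({⟨none, none, none, some s⟩, ⟨none, some s, none, some s⟩,
    ⟨none, some t, none, none⟩} : Finset (Tile (Option V))) ∪
  Finset.image (fun p : V × V => ⟨none, some p.1, none, some p.2⟩)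
    (Finset.univ.filter fun p : V × V => E p.1 p.2)

def columnOfColors {C : Type} (white : C) (c : ℕ → C) (h : ℕ) : Fin h → Tile C :=
  fun i => ⟨white, c i, white, c (i + 1)⟩

theorem isColTiling_columnOfColors {C : Type} {white : C} {T : Finset (Tile C)} {h : ℕ}
    {c : ℕ → C} (h0 : c 0 = white) (hh : c h = white)
    (hmem : ∀ i < h, (⟨white, c i, white, c (i + 1)⟩ : Tile C) ∈ T) :
    IsColTiling white T h (columnOfColors white c h) := by
  refine ⟨fun i => hmem i i.isLt, ?_, ?_, fun _ => rfl, fun _ => rfl, fun _ _ => rfl⟩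
  · rintro ⟨i, hi⟩ (rfl : i = 0)
    exact h0
  · rintro ⟨i, hi⟩ (hlast : i = h - 1)
    change c (i + 1) = white
    rwa [show i + 1 = h by omega]

theorem exists_padded_walk {V : Type} (E : V → V → Prop) {s t : V} {k m : ℕ}
    (hk : k ≤ m) {v : ℕ → V} (hv0 : v 0 = s) (hvk : v k = t)
    (hE : ∀ i < k, E (v i) (v (i + 1))) :
    ∃ w : ℕ → V, w 0 = s ∧ w m = t ∧
      ∀ i < m, (w i = s ∧ w (i + 1) = s) ∨ E (w i) (w (i + 1)) := by
  refine ⟨fun j => v (j - (m - k)), by simpa using hv0,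
    by simpa [Nat.sub_sub_self hk] using hvk, fun i hi => ?_⟩
  by_cases hpad : i + 1 ≤ m - k
  · left
    simp only [Nat.sub_eq_zero_of_le hpad, Nat.sub_eq_zero_of_le (Nat.le_of_succ_le hpad), hv0,
      and_self]
  · right
    have := hE (i - (m - k)) (by omega)
    rwa [show i - (m - k) + 1 = i + 1 - (m - k) by omega] at this

section reach

variable {V : Type} [Fintype V] [DecidableEq V] {E : V → V → Prop} [DecidableRel E] {s t : V}

theorem seed_mem_reachTiles :
    (⟨none, none, none, some s⟩ : Tile (Option V)) ∈ reachTiles E s t := by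
  simp [reachTiles]

theorem loop_mem_reachTiles :
    (⟨none, some s, none, some s⟩ : Tile (Option V)) ∈ reachTiles E s t := by
  simp [reachTiles]

theorem final_mem_reachTiles :
    (⟨none, some t, none, none⟩ : Tile (Option V)) ∈ reachTiles E s t := by
  simp [reachTiles]

theorem edge_mem_reachTiles {u v : V} (huv : E u v) :
    (⟨none, some u, none, some v⟩ : Tile (Option V)) ∈ reachTiles E s t := by
  simp only [reachTiles, Finset.mem_union, Finset.mem_image, Finset.mem_filter, Finset.mem_univ,
    true_and]
  exact Or.inr ⟨(u, v), huv, rfl⟩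

def reachColors (w : ℕ → V) (m : ℕ) : ℕ → Option V
  | 0 => none
  | j + 1 => if j ≤ m then some (w j) else none

theorem reachColors_tile_mem {w : ℕ → V} {m : ℕ} (hw0 : w 0 = s) (hwm : w m = t)
    (hstep : ∀ i < m, (w i = s ∧ w (i + 1) = s) ∨ E (w i) (w (i + 1)))
    {i : ℕ} (hi : i < m + 2) :
    (⟨none, reachColors w m i, none, reachColors w m (i + 1)⟩ : Tile (Option V)) ∈
      reachTiles E s t := by
  rcases i with _ | j
  · simpa [reachColors, hw0] using seed_mem_reachTiles
  rcases (show j < m ∨ j = m by omega) with hj | rfl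
  · simp only [reachColors, if_pos hj.le, if_pos (show j + 1 ≤ m by omega)]
    rcases hstep j hj with ⟨hs, hs'⟩ | hedge
    · rw [hs, hs']
      exact loop_mem_reachTiles
    · exact edge_mem_reachTiles hedge
  · simpa [reachColors, hwm] using final_mem_reachTiles

end reach

/-- A path of length at most m from s to t yields a tiling of the (m+2) × 1
rectangle whose first tile is the seed (up = white, down = s). -/
theorem path_to_colTiling {V : Type} [Fintype V] [DecidableEq V]
    (E : V → V → Prop) [DecidableRel E] (s t : V) (m : ℕ)
    (hpath : ∃ k ≤ m, ∃ v : ℕ → V, v 0 = s ∧ v k = t ∧ ∀ i < k, E (v i) (v (i + 1))) :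
    ∃ τ : Fin (m + 2) → Tile (Option V),
      IsColTiling none (reachTiles E s t) (m + 2) τ ∧
      τ ⟨0, by omega⟩ = ⟨none, none, none, some s⟩ := by
  obtain ⟨k, hk, v, hv0, hvk, hE⟩ := hpath
  obtain ⟨w, hw0, hwm, hstep⟩ := exists_padded_walk E hk hv0 hvk hE
  refine ⟨columnOfColors none (reachColors w m) (m + 2),
    isColTiling_columnOfColors rfl (by simp [reachColors])
      fun _ hi => reachColors_tile_mem hw0 hwm hstep hi, ?_⟩
  simp [columnOfColors, reachColors, hw0]
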